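/- Let g be a probability density on ℝ₊^m satisfying |g(z)/g₀(z) − 1| ≤ δ for all z, where g₀(z) = α^m ∏ᵢ(1+zᵢ)^{-(α+1)} is the product Pareto density and 0 < δ < 1. Let Z ∼ g and Z̃ ∼ g₀. Then for any τ > 0 and any weighted norm ‖·‖_a with positive weights, the total variation distance between the conditional laws of Z/‖Z‖_a given ‖Z‖_a > τ and of Z̃/‖Z̃‖_a given ‖Z̃‖_a > τ is at most 2δ. -/

import Mathlib

open MeasureTheory Filter Topology Real
open scoped ENNReal

/-- The measure on the positive orthant of `ℝ^m` with Lebesgue density `g`. -/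
noncomputable def orthMeasure (m : ℕ) (g : (Fin m → ℝ) → ℝ) :
    Measure (Fin m → ℝ) :=
  ((volume : Measure (Fin m → ℝ)).restrict {z | ∀ i, 0 < z i}).withDensity
    fun z => ENNReal.ofReal (g z)

/-- The conditional law of `Z/‖Z‖_a` given `‖Z‖_a > τ`, where
`‖z‖_a = Σᵢ aᵢ |zᵢ|`. -/
noncomputable def condAngular (m : ℕ) (a : Fin m → ℝ) (μ : Measure (Fin m → ℝ))
    (τ : ℝ) : Measure (Fin m → ℝ) :=
  ((μ {z | τ < ∑ i, a i * |z i|})⁻¹ •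
      μ.restrict {z | τ < ∑ i, a i * |z i|}).map
    fun z => (∑ i, a i * |z i|)⁻¹ • z

/-! Integrating the pointwise density bound gives `(1 - δ) ν ≤ μ ≤ (1 + δ) ν` as measures, where
`μ` and `ν` are the laws of `Z` and `Z̃`. The probability of `B` under the conditional angular law
is `μ(S ∩ E) / μ(S)` with `S = {‖z‖_a > τ}` and `E` the preimage of `B` under `z ↦ z/‖z‖_a`.
Numerator and denominator are both within relative error `δ` of their `ν`-counterparts, and for
`x ≤ X`, `y ≤ Y` this forces `|x/X - y/Y| ≤ 2δ`. -/

open ProbabilityTheory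

theorem abs_div_sub_div_le_two_mul {x X y Y δ : ℝ} (hδ1 : δ < 1) (hY : 0 < Y) (hx : 0 ≤ x)
    (hxX : x ≤ X) (hyY : y ≤ Y) (hxy : |x - y| ≤ δ * y) (hXY : |X - Y| ≤ δ * Y) :
    |x / X - y / Y| ≤ 2 * δ := by
  obtain ⟨hxy₁, hxy₂⟩ := abs_le.mp hxy
  obtain ⟨hXY₁, hXY₂⟩ := abs_le.mp hXY
  have hδ : 0 ≤ δ := nonneg_of_mul_nonneg_left (by linarith) hY
  have hX : 0 < X := by nlinarith
  rw [div_sub_div _ _ hX.ne' hY.ne', abs_div, abs_of_pos (mul_pos hX hY),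
    div_le_iff₀ (mul_pos hX hY), abs_le]
  -- `xY - yX = x(Y - X) + X(x - y)`, and `x ≤ X`, `y ≤ Y` bound both terms by `δXY`
  constructor <;> nlinarith [mul_le_mul_of_nonneg_left hyY (mul_nonneg hδ hX.le),
    mul_le_mul_of_nonneg_right hxX (mul_nonneg hδ hY.le)]

section Comparison

variable {Ω : Type*} [MeasurableSpace Ω] {μ ν : Measure Ω} {δ : ℝ}

theorem isFiniteMeasure_of_smul_le [IsFiniteMeasure μ] {c : ℝ≥0∞} (hc : c ≠ 0) (h : c • ν ≤ μ) :
    IsFiniteMeasure ν :=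
  ⟨ENNReal.lt_top_of_mul_ne_top_right ((h Set.univ).trans_lt (measure_lt_top μ _)).ne hc⟩

theorem abs_toReal_measure_sub_le [IsFiniteMeasure ν] (hδ : 0 ≤ δ) (hδ1 : δ ≤ 1)
    (hlow : ENNReal.ofReal (1 - δ) • ν ≤ μ) (hup : μ ≤ ENNReal.ofReal (1 + δ) • ν) (s : Set Ω) :
    |(μ s).toReal - (ν s).toReal| ≤ δ * (ν s).toReal := by
  have hup_s := hup s
  have hlow_s := hlow s
  simp only [Measure.smul_apply, smul_eq_mul] at hup_s hlow_s
  have h₁ := ENNReal.toReal_mono (ne_top_of_le_ne_top (by finiteness) hup_s) hlow_s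
  have h₂ := ENNReal.toReal_mono (by finiteness) hup_s
  rw [ENNReal.toReal_mul, ENNReal.toReal_ofReal (by linarith)] at h₁ h₂
  rw [abs_le]
  constructor <;> linarith

theorem abs_toReal_cond_sub_le [IsFiniteMeasure ν] (hδ : 0 ≤ δ) (hδ1 : δ < 1)
    (hlow : ENNReal.ofReal (1 - δ) • ν ≤ μ) (hup : μ ≤ ENNReal.ofReal (1 + δ) • ν) (s : Set Ω)
    {t : Set Ω} (ht : MeasurableSet t) :
    |(μ[t|s]).toReal - (ν[t|s]).toReal| ≤ 2 * δ := by
  have : IsFiniteMeasure (ENNReal.ofReal (1 + δ) • ν) := ν.smul_finite ENNReal.ofReal_ne_top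
  have : IsFiniteMeasure μ := isFiniteMeasure_of_le _ hup
  rcases eq_or_ne (ν s) 0 with hνs | hνs
  · have hμs : μ s = 0 := by simpa [hνs] using hup s
    simp [cond_eq_zero_of_meas_eq_zero hμs, cond_eq_zero_of_meas_eq_zero hνs, hδ]
  rw [cond_apply' ht, cond_apply' ht, ENNReal.toReal_mul, ENNReal.toReal_mul, ENNReal.toReal_inv,
    ENNReal.toReal_inv, inv_mul_eq_div, inv_mul_eq_div]
  exact abs_div_sub_div_le_two_mul hδ1 (ENNReal.toReal_pos hνs (measure_ne_top _ _))
    ENNReal.toReal_nonneg (measureReal_mono Set.inter_subset_left)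
    (measureReal_mono Set.inter_subset_left) (abs_toReal_measure_sub_le hδ hδ1.le hlow hup _)
    (abs_toReal_measure_sub_le hδ hδ1.le hlow hup _)

end Comparison

section OrthMeasure

variable {m : ℕ} {g h : (Fin m → ℝ) → ℝ}

theorem orthMeasure_mono (hgh : ∀ z : Fin m → ℝ, (∀ i, 0 < z i) → g z ≤ h z) :
    orthMeasure m g ≤ orthMeasure m h :=
  withDensity_mono <| (ae_restrict_iff' (by measurability)).2 <|
    .of_forall fun z hz => ENNReal.ofReal_le_ofReal (hgh z hz)

theorem orthMeasure_const_mul {c : ℝ} (hc : 0 ≤ c) :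
    orthMeasure m (fun z => c * g z) = ENNReal.ofReal c • orthMeasure m g := by
  simp only [orthMeasure, ENNReal.ofReal_mul hc]
  exact withDensity_smul' _ _ ENNReal.ofReal_ne_top

theorem orthMeasure_smul_le_of_abs_div_sub_one_le {δ : ℝ} (hδ : 0 ≤ δ) (hδ1 : δ ≤ 1)
    (hh : ∀ z : Fin m → ℝ, (∀ i, 0 < z i) → 0 < h z)
    (hratio : ∀ z : Fin m → ℝ, (∀ i, 0 < z i) → |g z / h z - 1| ≤ δ) :
    ENNReal.ofReal (1 - δ) • orthMeasure m h ≤ orthMeasure m g ∧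
      orthMeasure m g ≤ ENNReal.ofReal (1 + δ) • orthMeasure m h := by
  rw [← orthMeasure_const_mul (by linarith), ← orthMeasure_const_mul (by linarith)]
  have hbounds : ∀ z : Fin m → ℝ, (∀ i, 0 < z i) → (1 - δ) * h z ≤ g z ∧ g z ≤ (1 + δ) * h z :=
    fun z hz => by
      obtain ⟨hlow, hup⟩ := abs_le.mp (hratio z hz)
      exact ⟨(le_div_iff₀ (hh z hz)).mp (by linarith), (div_le_iff₀ (hh z hz)).mp (by linarith)⟩
  exact ⟨orthMeasure_mono fun z hz => (hbounds z hz).1,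
    orthMeasure_mono fun z hz => (hbounds z hz).2⟩

end OrthMeasure

theorem pareto_density_pos {m : ℕ} {α : ℝ} (hα : 0 < α) {z : Fin m → ℝ} (hz : ∀ i, 0 < z i) :
    0 < α ^ m * ∏ i, (1 + z i) ^ (-(α + 1)) :=
  mul_pos (pow_pos hα m) (Finset.prod_pos fun i _ => Real.rpow_pos_of_pos (by linarith [hz i]) _)

theorem condAngular_apply (m : ℕ) (a : Fin m → ℝ) (μ : Measure (Fin m → ℝ)) (τ : ℝ)
    {B : Set (Fin m → ℝ)} (hB : MeasurableSet B) :
    condAngular m a μ τ B =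
      μ[(fun z => (∑ i, a i * |z i|)⁻¹ • z) ⁻¹' B | {z | τ < ∑ i, a i * |z i|}] :=
  Measure.map_apply (by fun_prop) hB

theorem condAngular_tv_bound_general (m : ℕ) (α δ : ℝ) (hα : 0 < α) (hδ : 0 < δ)
    (hδ1 : δ < 1) (a : Fin m → ℝ) (τ : ℝ)
    (g : (Fin m → ℝ) → ℝ)
    (hgprob : IsProbabilityMeasure (orthMeasure m g))
    (hratio : ∀ z : Fin m → ℝ, (∀ i, 0 < z i) →
      |g z / (α ^ m * ∏ i, (1 + z i) ^ (-(α + 1))) - 1| ≤ δ) :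
    ∀ B : Set (Fin m → ℝ), MeasurableSet B →
      |((condAngular m a (orthMeasure m g) τ) B).toReal -
          ((condAngular m a
            (orthMeasure m fun z => α ^ m * ∏ i, (1 + z i) ^ (-(α + 1))) τ)
            B).toReal| ≤ 2 * δ := by
  intro B hB
  obtain ⟨hlow, hup⟩ := orthMeasure_smul_le_of_abs_div_sub_one_le hδ.le hδ1.le
    (fun z hz => pareto_density_pos hα hz) hratio
  have := isFiniteMeasure_of_smul_le (by simpa using hδ1) hlow
  rw [condAngular_apply _ _ _ _ hB, condAngular_apply _ _ _ _ hB]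
  exact abs_toReal_cond_sub_le hδ.le hδ1 hlow hup _ (measurableSet_preimage (by fun_prop) hB)

/-- If a probability density `g` on `ℝ₊^m` satisfies `|g/g₀ − 1| ≤ δ`
pointwise, where `g₀(z) = α^m ∏ᵢ (1+zᵢ)^{-(α+1)}` is the product Pareto
density and `0 < δ < 1`, then for any threshold `τ > 0` and positive weights
`a`, the total variation distance between the conditional angular laws of
`Z ∼ g` and `Z̃ ∼ g₀` is at most `2δ`. -/
theorem condAngular_tv_bound (m : ℕ) (α δ : ℝ) (hα : 0 < α) (hδ : 0 < δ)
    (hδ1 : δ < 1) (a : Fin m → ℝ) (ha : ∀ i, 0 < a i) (τ : ℝ) (hτ : 0 < τ)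
    (g : (Fin m → ℝ) → ℝ)
    (hgprob : IsProbabilityMeasure (orthMeasure m g))
    (hratio : ∀ z : Fin m → ℝ, (∀ i, 0 < z i) →
      |g z / (α ^ m * ∏ i, (1 + z i) ^ (-(α + 1))) - 1| ≤ δ) :
    ∀ B : Set (Fin m → ℝ), MeasurableSet B →
      |((condAngular m a (orthMeasure m g) τ) B).toReal -
          ((condAngular m a
            (orthMeasure m fun z => α ^ m * ∏ i, (1 + z i) ^ (-(α + 1))) τ)
            B).toReal| ≤ 2 * δ :=
  condAngular_tv_bound_general m α δ hα hδ hδ1 a τ g hgprob hratio
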